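/- Consider the multi-agent system ẋ_i(t) = sat(Σ_{j∈N_i}(x_j(t) − x_i(t))) with sat the linear saturation function with lower bound τ_l = 0. Then: (a) every state x_i(t) is nondecreasing in t; (b) if agent q attains the maximum of the initial states, i.e., x_q(0) = max_{j} x_j(0), then x_q(t) = x_q(0) for all t ≥ 0 and x_i(t) ≤ x_q(0) for all agents i and all t ≥ 0. (Remark 2, first part.) -/
import Mathlib

/-- The linear saturation function with lower bound `τ_l = 0`,
upper bound `τh > 0` and saturation level `r > 0`. -/
noncomputable def sat (τh r s : ℝ) : ℝ :=
  if s ≤ 0 then 0 else if s < r then τh / r * s else τh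

lemma sat_nonneg {τh r : ℝ} (hτh : 0 < τh) (hr : 0 < r) (s : ℝ) : 0 ≤ sat τh r s := by
  unfold sat
  split_ifs with h1 h2
  · exact le_rfl
  · exact mul_nonneg (div_nonneg hτh.le hr.le) (le_of_not_ge h1)
  · exact hτh.le

lemma sat_le {τh r : ℝ} (hτh : 0 < τh) (hr : 0 < r) (s : ℝ) : sat τh r s ≤ τh := by
  unfold sat
  split_ifs with h1 h2
  · exact hτh.le
  · push_neg at h1
    rw [div_mul_eq_mul_div, div_le_iff₀ hr]
    nlinarith
  · exact le_rfl

lemma sat_of_nonpos {τh r s : ℝ} (hs : s ≤ 0) : sat τh r s = 0 := if_pos hs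

/-- Remark 2 (first part): for the multi-agent system
`ẋ_i = sat(Σ_{j∈N_i}(x_j − x_i))` on a connected graph with the non-negative
saturation (`τ_l = 0`): (a) every state is nondecreasing in time, and
(b) an agent `q` attaining the maximal initial state stays constant, and all
states remain below that maximum. -/
theorem saturated_consensus_max_invariant (N : ℕ) (G : SimpleGraph (Fin N))
    [DecidableRel G.Adj] (hconn : G.Connected)
    (τh r : ℝ) (hτh : 0 < τh) (hr : 0 < r)
    (x : ℝ → Fin N → ℝ)
    (hx : ∀ i : Fin N, Differentiable ℝ (fun t => x t i))
    (hODE : ∀ i : Fin N, ∀ t : ℝ, 0 ≤ t →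
      HasDerivAt (fun s => x s i)
        (sat τh r (∑ j ∈ G.neighborFinset i, (x t j - x t i))) t) :
    (∀ i : Fin N, ∀ s t : ℝ, 0 ≤ s → s ≤ t → x s i ≤ x t i) ∧
    ∀ q : Fin N, (∀ j : Fin N, x 0 j ≤ x 0 q) →
      (∀ t : ℝ, 0 ≤ t → x t q = x 0 q) ∧
      (∀ i : Fin N, ∀ t : ℝ, 0 ≤ t → x t i ≤ x 0 q) := by
  -- Part (a): each state is nondecreasing on [0,∞)
  have mono : ∀ i : Fin N, ∀ s t : ℝ, 0 ≤ s → s ≤ t → x s i ≤ x t i := by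
    intro i s t hs hst
    have hm : MonotoneOn (fun t => x t i) (Set.Ici (0 : ℝ)) := by
      apply monotoneOn_of_deriv_nonneg (convex_Ici 0) (hx i).continuous.continuousOn
        ((hx i).differentiableOn)
      intro u hu
      rw [interior_Ici] at hu
      rw [(hODE i u (le_of_lt hu)).deriv]
      exact sat_nonneg hτh hr _
    exact hm (Set.mem_Ici.2 hs) (Set.mem_Ici.2 (hs.trans hst)) hst
  refine ⟨mono, ?_⟩
  intro q hq
  set M := x 0 q with hM
  have hne : (Finset.univ : Finset (Fin N)).Nonempty := ⟨q, Finset.mem_univ q⟩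
  set f : ℝ → ℝ := fun s => Finset.univ.sup' hne (fun i => x s i) with hf
  have hfc : Continuous f := by
    have : Continuous fun s => Finset.univ.sup' hne (fun i => (fun u => x u i) s) :=
      Continuous.finset_sup'_apply hne (fun i _ => (hx i).continuous)
    exact this
  have hle_f : ∀ s i, x s i ≤ f s := fun s i => Finset.le_sup' _ (Finset.mem_univ i)
  -- key bound: f s ≤ M + ε s on [0, b]
  have key : ∀ b : ℝ, ∀ ε > (0:ℝ), ∀ s ∈ Set.Icc (0:ℝ) b, f s ≤ M + ε * s := by
    intro b ε hε
    have hB : ∀ s : ℝ, HasDerivAt (fun u => M + ε * u) ε s := by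
      intro s
      simpa using ((hasDerivAt_id s).const_mul ε).const_add M
    apply image_le_of_liminf_slope_right_lt_deriv_boundary
      (f' := fun s => if f s = M + ε * s then 0 else τh) hfc.continuousOn ?_ ?_ hB ?_
    · -- slope bound
      intro s hs c hc
      have hc0 : 0 < c := by
        refine lt_of_le_of_lt ?_ hc
        split_ifs
        · exact le_rfl
        · exact hτh.le
      have hcond : ∀ i : Fin N,
          sat τh r (∑ j ∈ G.neighborFinset i, (x s j - x s i)) < c ∨ x s i < f s := by
        intro i
        by_cases hfB : f s = M + ε * s
        · rcases lt_or_eq_of_le (hle_f s i) with h | h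
          · exact Or.inr h
          · left
            have hsum : (∑ j ∈ G.neighborFinset i, (x s j - x s i)) ≤ 0 := by
              apply Finset.sum_nonpos
              intro j _
              have h2 := hle_f s j
              linarith [h]
            rw [sat_of_nonpos hsum]
            exact hc0
        · left
          rw [if_neg hfB] at hc
          exact lt_of_le_of_lt (sat_le hτh hr _) hc
      have hev : ∀ᶠ z in nhdsWithin s (Set.Ioi s),
          ∀ i : Fin N, slope (fun u => x u i) s z < c ∨ x z i < f s := by
        rw [Filter.eventually_all]
        intro i
        rcases hcond i with h | h
        · have ht := hasDerivAt_iff_tendsto_slope.1 (hODE i s hs.1)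
          have h1 : ∀ᶠ z in nhdsWithin s {s}ᶜ, slope (fun u => x u i) s z < c :=
            ht (Iio_mem_nhds h)
          have hmono : nhdsWithin s (Set.Ioi s) ≤ nhdsWithin s {s}ᶜ :=
            nhdsWithin_mono s (fun z hz => ne_of_gt hz)
          exact (h1.filter_mono hmono).mono fun z hz => Or.inl hz
        · have h1 : ∀ᶠ z in nhds s, x z i < f s :=
            (hx i).continuous.continuousAt (Iio_mem_nhds h)
          exact (eventually_nhdsWithin_of_eventually_nhds h1).mono fun z hz => Or.inr hz
      have hev2 : ∀ᶠ z in nhdsWithin s (Set.Ioi s), slope f s z < c := by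
        filter_upwards [hev, self_mem_nhdsWithin] with z hz hzs
        have hzs' : (0:ℝ) < z - s := sub_pos.2 hzs
        obtain ⟨i, _, hfi⟩ := Finset.exists_mem_eq_sup' hne (fun i => x z i)
        rcases hz i with h | h
        · rw [slope_def_field] at h ⊢
          calc (f z - f s) / (z - s) ≤ (x z i - x s i) / (z - s) := by
                apply div_le_div_of_nonneg_right ?_ hzs'.le
                have h1 := hle_f s i
                have h2 : f z = x z i := hfi
                linarith
            _ < c := h
        · rw [slope_def_field]
          have hnum : f z - f s < 0 := by
            have : f z = x z i := hfi
            linarith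
          exact lt_trans (div_neg_of_neg_of_pos hnum hzs') hc0
      exact hev2.frequently
    · -- initial condition
      simp only [mul_zero, add_zero]
      exact Finset.sup'_le hne _ fun i _ => hq i
    · -- boundary bound
      intro s _ hfs
      rw [if_pos hfs]
      exact hε
  -- from key, f t ≤ M for t ≥ 0
  have hfM : ∀ t : ℝ, 0 ≤ t → f t ≤ M := by
    intro t ht
    by_contra hcon
    push_neg at hcon
    have htpos : (0:ℝ) < t + 1 := by linarith
    set ε := (f t - M) / (t + 1) with hεdef
    have hεpos : 0 < ε := div_pos (by linarith) htpos
    have h1 := key t ε hεpos t ⟨ht, le_rfl⟩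
    have h2 : ε * t < ε * (t + 1) := by nlinarith
    have h3 : ε * (t + 1) = f t - M := by
      rw [hεdef, div_mul_cancel₀]
      exact ne_of_gt htpos
    linarith
  have hbound : ∀ i : Fin N, ∀ t : ℝ, 0 ≤ t → x t i ≤ M :=
    fun i t ht => (hle_f t i).trans (hfM t ht)
  refine ⟨fun t ht => le_antisymm (hbound q t ht) (mono q 0 t le_rfl ht), hbound⟩
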